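/- arXiv:2302.13554 — 7 statements merged into one kernel-verified Lean document; each statement's English description precedes it below -/
import Mathlib

section
/- If F : Ω → U is a continuous frame for a Hilbert C*-module U with frame operator S_F, and G₁ : Ω → U is a dual of F, then the mapping G₂ defined by G₂(ω) = S_F⁻¹F(ω) + S_F G₁(ω) − F(ω) is also a dual of F. -/
open MeasureTheory

noncomputable section

variable {A : Type*} [CStarAlgebra A] [PartialOrder A] [StarOrderedRing A]
variable {U : Type*} [AddCommGroup U] [Module A U]
variable {Ω : Type*} [MeasurableSpace Ω]

/-- `F : Ω → U` is a continuous Bessel mapping with bound `B`, with respect to the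
`A`-valued inner product `ip` (which is `A`-linear in the first variable). -/
def IsBessel (μ : Measure Ω) (ip : U → U → A) (F : Ω → U) (B : ℝ) : Prop :=
  (∀ f g : U, Integrable (fun ω => ip f (F ω) * ip (F ω) g) μ) ∧
    ∀ f : U, ∫ ω, ip f (F ω) * ip (F ω) f ∂μ ≤ B • ip f f

/-- `F : Ω → U` is a continuous frame with frame bounds `A₀`, `B₀`. -/
def IsFrame (μ : Measure Ω) (ip : U → U → A) (F : Ω → U) (A₀ B₀ : ℝ) : Prop :=
  0 < A₀ ∧ 0 < B₀ ∧
    (∀ f g : U, Integrable (fun ω => ip f (F ω) * ip (F ω) g) μ) ∧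
    ∀ f : U, A₀ • ip f f ≤ ∫ ω, ip f (F ω) * ip (F ω) f ∂μ ∧
      ∫ ω, ip f (F ω) * ip (F ω) f ∂μ ≤ B₀ • ip f f

/-- `G` is a dual of `F`: the weak reconstruction formula
`⟨f, g⟩ = ∫ ⟨f, G ω⟩⟨F ω, g⟩ dμ(ω)` holds for all `f, g ∈ U`. -/
def IsDual (μ : Measure Ω) (ip : U → U → A) (F G : Ω → U) : Prop :=
  ∀ f g : U, ∫ ω, ip f (G ω) * ip (F ω) g ∂μ = ip f g

/-- `S` is the frame operator of `F`, in the weak sense: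
`⟨S f, g⟩ = ∫ ⟨f, F ω⟩⟨F ω, g⟩ dμ(ω)`. -/
def IsFrameOp (μ : Measure Ω) (ip : U → U → A) (F : Ω → U) (S : U → U) : Prop :=
  ∀ f g : U, ip (S f) g = ∫ ω, ip f (F ω) * ip (F ω) g ∂μ

/-!
Write `⟨f, g⟩_{F,G} = ∫ ⟨f, F ω⟩⟨G ω, g⟩ dμ(ω)`. This pairing is additive in `F` and in `G`, and a
symmetric operator moves across it: `⟨f, g⟩_{T ∘ F, G} = ⟨T f, g⟩_{F,G}`. Since
`⟨f, g⟩_{F,F} = ⟨S f, g⟩` and `⟨f, g⟩_{G₁,F} = ⟨f, g⟩`, expanding `G₂ = S⁻¹F + S G₁ - F` gives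
`⟨f, g⟩_{G₂,F} = ⟨f, g⟩ + ⟨S f, g⟩ - ⟨S f, g⟩`, and then
`⟨f, f⟩_{G₂,G₂} = ⟨f, S⁻¹ f⟩ + ⟨S f, S f⟩_{G₁,G₁} - ⟨S f, f⟩ ≤ (A₀⁻¹ + B₁ B₀²) ⟨f, f⟩`.
The bounds `⟨f, S⁻¹ f⟩ ≤ A₀⁻¹ ⟨f, f⟩` and `⟨S f, S f⟩ ≤ B₀ ⟨S f, f⟩` are two instances of one
inequality for positive hermitian forms, applied to `⟨·, ·⟩` and to `⟨S ·, ·⟩`.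
-/

section HermitianForm

variable {𝒜 E : Type*} [Ring 𝒜] [StarRing 𝒜] [AddCommGroup E] [Module 𝒜 E]

structure IsHermitianForm (q : E → E → 𝒜) : Prop where
  add_left : ∀ f g h : E, q (f + g) h = q f h + q g h
  smul_left : ∀ (a : 𝒜) (f g : E), q (a • f) g = a * q f g
  star_apply : ∀ f g : E, star (q f g) = q g f

namespace IsHermitianForm

variable {q : E → E → 𝒜}

theorem add_right (hq : IsHermitianForm q) (f g h : E) : q f (g + h) = q f g + q f h := by
  rw [← hq.star_apply, hq.add_left, star_add, hq.star_apply, hq.star_apply]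

theorem zero_left (hq : IsHermitianForm q) (g : E) : q 0 g = 0 := by
  simpa using hq.add_left 0 0 g

theorem sub_left (hq : IsHermitianForm q) (f g h : E) : q (f - g) h = q f h - q g h := by
  rw [eq_sub_iff_add_eq, ← hq.add_left, sub_add_cancel]

theorem sub_right (hq : IsHermitianForm q) (f g h : E) : q f (g - h) = q f g - q f h := by
  rw [← hq.star_apply, hq.sub_left, star_sub, hq.star_apply, hq.star_apply]

theorem smul_right (hq : IsHermitianForm q) (a : 𝒜) (f g : E) :
    q f (a • g) = q f g * star a := by
  rw [← hq.star_apply, hq.smul_left, star_mul, hq.star_apply]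

/-- Expand `0 ≤ q (f - c u) (f - c u)`; the hypothesis bounds the quadratic term `c² q u u`. -/
theorem le_inv_smul_of_smul_le [PartialOrder 𝒜] [StarOrderedRing 𝒜] [Algebra ℝ 𝒜]
    [StarModule ℝ 𝒜] (hq : IsHermitianForm q) (hpos : ∀ f, 0 ≤ q f f) {c : ℝ} (hc : 0 < c)
    {f u : E} (h : c • q u u ≤ q f u) : q f u ≤ c⁻¹ • q f f := by
  have hsa : IsSelfAdjoint (q f u) := by
    simpa using (sub_nonneg.mpr h).isSelfAdjoint.add (smul_nonneg hc.le (hpos u)).isSelfAdjoint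
  have hswap : q u f = q f u := by rw [← hq.star_apply, hsa.star_eq]
  set a : 𝒜 := algebraMap ℝ 𝒜 c
  have ha : star a = a := by rw [← algebraMap_star_comm, star_trivial]
  have hexp : q (f - a • u) (f - a • u) = q f f - c • q f u - (c • q f u - c • c • q u u) := by
    simp only [hq.sub_left, hq.sub_right, hq.smul_left, hq.smul_right, ha, hswap, a,
      ← Algebra.smul_def, ← Algebra.commutes]
  have hquad : c • c • q u u ≤ c • q f u := smul_le_smul_of_nonneg_left h hc.le
  have hlin : c • q f u ≤ q f f :=
    sub_nonneg.mp ((hexp ▸ hpos (f - a • u)).trans (sub_le_self _ (sub_nonneg.mpr hquad)))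
  calc q f u = c⁻¹ • c • q f u := by rw [inv_smul_smul₀ hc.ne']
    _ ≤ c⁻¹ • q f f := smul_le_smul_of_nonneg_left hlin (inv_nonneg.mpr hc.le)

end IsHermitianForm

end HermitianForm

section SymmetricOperator

variable {𝒜 E : Type*} {ip : E → E → 𝒜} {S T : E → E}

def IsSymmetricWrt (ip : E → E → 𝒜) (T : E → E) : Prop :=
  ∀ f g : E, ip (T f) g = ip f (T g)

theorem IsSymmetricWrt.of_leftInverse (hT : IsSymmetricWrt ip T) (hST : Function.LeftInverse T S) :
    IsSymmetricWrt ip S := fun f g => by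
  conv_lhs => rw [← hST g, ← hT, hST]

end SymmetricOperator

section CrossForm

variable {𝒜 E X : Type*} [CStarAlgebra 𝒜] [MeasurableSpace X]
  {μ : Measure X} {ip : E → E → 𝒜} {F G H : X → E} {T : E → E}

theorem star_integral (φ : X → 𝒜) : star (∫ x, φ x ∂μ) = ∫ x, star (φ x) ∂μ :=
  ((starL' ℝ : 𝒜 ≃L[ℝ] 𝒜).integral_comp_comm φ).symm

theorem MeasureTheory.Integrable.star {φ : X → 𝒜} (h : Integrable φ μ) :
    Integrable (fun x => star (φ x)) μ :=
  (starL' ℝ : 𝒜 ≃L[ℝ] 𝒜).toContinuousLinearMap.integrable_comp h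

def CrossIntegrable (μ : Measure X) (ip : E → E → 𝒜) (F G : X → E) : Prop :=
  ∀ f g : E, Integrable (fun ω => ip f (F ω) * ip (G ω) g) μ

def crossForm (μ : Measure X) (ip : E → E → 𝒜) (F G : X → E) (f g : E) : 𝒜 :=
  ∫ ω, ip f (F ω) * ip (G ω) g ∂μ

theorem CrossIntegrable.comp_left (hT : IsSymmetricWrt ip T) (h : CrossIntegrable μ ip F G) :
    CrossIntegrable μ ip (T ∘ F) G := fun f g => by
  simpa only [Function.comp_apply, hT f] using h (T f) g

theorem crossForm_comp_left (hT : IsSymmetricWrt ip T) (f g : E) :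
    crossForm μ ip (T ∘ F) G f g = crossForm μ ip F G (T f) g := by
  simp only [crossForm, Function.comp_apply, hT f]

theorem IsFrameOp.crossForm_eq {S : E → E} (hS : IsFrameOp μ ip F S) (f g : E) :
    crossForm μ ip F F f g = ip (S f) g :=
  (hS f g).symm

theorem IsDual.crossForm_eq (hG : IsDual μ ip F G) (f g : E) : crossForm μ ip G F f g = ip f g :=
  hG f g

variable [AddCommGroup E] [Module 𝒜 E]

theorem star_crossForm (hip : IsHermitianForm ip) (f g : E) :
    star (crossForm μ ip F G f g) = crossForm μ ip G F g f := by
  simp only [crossForm, star_integral, star_mul, hip.star_apply]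

theorem CrossIntegrable.swap (hip : IsHermitianForm ip) (h : CrossIntegrable μ ip F G) :
    CrossIntegrable μ ip G F := fun f g => by
  simpa only [star_mul, hip.star_apply] using (h g f).star

theorem CrossIntegrable.add_left (hip : IsHermitianForm ip) (hF : CrossIntegrable μ ip F H)
    (hG : CrossIntegrable μ ip G H) : CrossIntegrable μ ip (F + G) H := fun f g => by
  simp only [Pi.add_apply, hip.add_right, add_mul]
  exact (hF f g).add (hG f g)

theorem CrossIntegrable.sub_left (hip : IsHermitianForm ip) (hF : CrossIntegrable μ ip F H)
    (hG : CrossIntegrable μ ip G H) : CrossIntegrable μ ip (F - G) H := fun f g => by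
  simp only [Pi.sub_apply, hip.sub_right, sub_mul]
  exact (hF f g).sub (hG f g)

theorem crossForm_add_left (hip : IsHermitianForm ip) (hF : CrossIntegrable μ ip F H)
    (hG : CrossIntegrable μ ip G H) (f g : E) :
    crossForm μ ip (F + G) H f g = crossForm μ ip F H f g + crossForm μ ip G H f g := by
  simp only [crossForm, Pi.add_apply, hip.add_right, add_mul]
  exact integral_add (hF f g) (hG f g)

theorem crossForm_sub_left (hip : IsHermitianForm ip) (hF : CrossIntegrable μ ip F H)
    (hG : CrossIntegrable μ ip G H) (f g : E) :
    crossForm μ ip (F - G) H f g = crossForm μ ip F H f g - crossForm μ ip G H f g := by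
  simp only [crossForm, Pi.sub_apply, hip.sub_right, sub_mul]
  exact integral_sub (hF f g) (hG f g)

theorem isHermitianForm_crossForm (hip : IsHermitianForm ip) (h : CrossIntegrable μ ip F F) :
    IsHermitianForm (crossForm μ ip F F) where
  add_left f g k := by
    simp only [crossForm, hip.add_left, add_mul]
    exact integral_add (h f k) (h g k)
  smul_left a f g := by
    simp only [crossForm, hip.smul_left, mul_assoc]
    exact integral_const_mul_of_integrable (h f g)
  star_apply f g := star_crossForm hip f g

theorem crossForm_self_nonneg [PartialOrder 𝒜] [StarOrderedRing 𝒜] (hip : IsHermitianForm ip)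
    (f : E) : 0 ≤ crossForm μ ip F F f f :=
  integral_nonneg fun ω => by
    simpa only [Pi.zero_apply, hip.star_apply] using mul_star_self_nonneg (ip f (F ω))

end CrossForm

section Frames

variable {𝒜 E X : Type*} [CStarAlgebra 𝒜] [AddCommGroup E] [Module 𝒜 E] [MeasurableSpace X]
  {μ : Measure X} {ip : E → E → 𝒜} {F G : X → E} {S Sinv : E → E}

theorem IsFrameOp.isSymmetricWrt (hip : IsHermitianForm ip) (hS : IsFrameOp μ ip F S) :
    IsSymmetricWrt ip S := fun f g => by
  rw [← hS.crossForm_eq, ← star_crossForm hip, hS.crossForm_eq, hip.star_apply]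

theorem IsDual.crossForm_swap_eq (hip : IsHermitianForm ip) (hG : IsDual μ ip F G) (f g : E) :
    crossForm μ ip F G f g = ip f g := by
  rw [← star_crossForm hip, hG.crossForm_eq, hip.star_apply]

/-- A Bochner integral with nonzero value is that of an integrable function, and duality fixes
the values; the case `⟨f, g⟩ = 0` reduces to `g + f` and `f`. -/
theorem IsDual.crossIntegrable (hip : IsHermitianForm ip) (hdef : ∀ f, ip f f = 0 → f = 0)
    (hG : IsDual μ ip F G) : CrossIntegrable μ ip G F := by
  have of_ne : ∀ f g, ip f g ≠ 0 → Integrable (fun ω => ip f (G ω) * ip (F ω) g) μ :=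
    fun f g hne => by
      by_contra hni
      exact hne ((hG f g).symm.trans (integral_undef hni))
  intro f g
  rcases eq_or_ne f 0 with rfl | hf
  · simp only [hip.zero_left, zero_mul]
    exact integrable_zero _ _ _
  by_cases hfg : ip f g = 0
  · have hff : ip f f ≠ 0 := mt (hdef f) hf
    have hfgf : ip f (g + f) ≠ 0 := by rwa [hip.add_right, hfg, zero_add]
    refine ((of_ne f (g + f) hfgf).sub (of_ne f f hff)).congr (ae_of_all _ fun ω => ?_)
    simp only [Pi.sub_apply, hip.add_right, mul_add, add_sub_cancel_right]
  · exact of_ne f g hfg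

variable [PartialOrder 𝒜] [StarOrderedRing 𝒜]

theorem apply_inv_le_inv_smul (hip : IsHermitianForm ip) (hpos : ∀ f, 0 ≤ ip f f)
    (hSinv : Function.LeftInverse S Sinv) {a : ℝ} (ha : 0 < a)
    (hlow : ∀ f, a • ip f f ≤ ip (S f) f) (f : E) : ip f (Sinv f) ≤ a⁻¹ • ip f f :=
  hip.le_inv_smul_of_smul_le hpos ha (by simpa only [hSinv f] using hlow (Sinv f))

theorem IsFrameOp.apply_apply_le (hip : IsHermitianForm ip) (hS : IsFrameOp μ ip F S)
    (hF : CrossIntegrable μ ip F F) {b : ℝ} (hb : 0 < b)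
    (hup : ∀ f, crossForm μ ip F F f f ≤ b • ip f f) (f : E) :
    ip (S f) (S f) ≤ (b * b) • ip f f := by
  have hSS : ip (S f) (S f) ≤ b • ip (S f) f := by
    have hSf : b⁻¹ • crossForm μ ip F F (S f) (S f) ≤ crossForm μ ip F F f (S f) := by
      rw [hS.crossForm_eq f, ← inv_smul_smul₀ hb.ne' (ip (S f) (S f))]
      exact smul_le_smul_of_nonneg_left (hup (S f)) (inv_nonneg.mpr hb.le)
    have hq := isHermitianForm_crossForm hip hF
    simpa only [hS.crossForm_eq, inv_inv] using
      hq.le_inv_smul_of_smul_le (crossForm_self_nonneg hip) (inv_pos.mpr hb) hSf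
  calc ip (S f) (S f) ≤ b • ip (S f) f := hSS
    _ ≤ b • b • ip f f := smul_le_smul_of_nonneg_left (hS.crossForm_eq f f ▸ hup f) hb.le
    _ = (b * b) • ip f f := smul_smul _ _ _

end Frames

section DualOfDual

variable {𝒜 E X : Type*} [CStarAlgebra 𝒜] [AddCommGroup E] [Module 𝒜 E] [MeasurableSpace X]
  {μ : Measure X} {ip : E → E → 𝒜} {F G H : X → E} {S Sinv : E → E}

def dualOfDual (S Sinv : E → E) (F G : X → E) : X → E :=
  Sinv ∘ F + S ∘ G - F

theorem CrossIntegrable.dualOfDual_left (hip : IsHermitianForm ip) (hS : IsSymmetricWrt ip S)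
    (hSinv : IsSymmetricWrt ip Sinv) (hF : CrossIntegrable μ ip F H)
    (hG : CrossIntegrable μ ip G H) : CrossIntegrable μ ip (dualOfDual S Sinv F G) H :=
  ((hF.comp_left hSinv).add_left hip (hG.comp_left hS)).sub_left hip hF

theorem crossForm_dualOfDual_left (hip : IsHermitianForm ip) (hS : IsSymmetricWrt ip S)
    (hSinv : IsSymmetricWrt ip Sinv) (hF : CrossIntegrable μ ip F H)
    (hG : CrossIntegrable μ ip G H) (f g : E) :
    crossForm μ ip (dualOfDual S Sinv F G) H f g =
      crossForm μ ip F H (Sinv f) g + crossForm μ ip G H (S f) g - crossForm μ ip F H f g := by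
  rw [dualOfDual, crossForm_sub_left hip ((hF.comp_left hSinv).add_left hip (hG.comp_left hS)) hF,
    crossForm_add_left hip (hF.comp_left hSinv) (hG.comp_left hS), crossForm_comp_left hSinv,
    crossForm_comp_left hS]

theorem crossForm_dualOfDual_right (hip : IsHermitianForm ip) (hS : IsSymmetricWrt ip S)
    (hSinv : IsSymmetricWrt ip Sinv) (hF : CrossIntegrable μ ip H F)
    (hG : CrossIntegrable μ ip H G) (f g : E) :
    crossForm μ ip H (dualOfDual S Sinv F G) f g =
      crossForm μ ip H F f (Sinv g) + crossForm μ ip H G f (S g) - crossForm μ ip H F f g := by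
  rw [← star_crossForm hip, crossForm_dualOfDual_left hip hS hSinv (hF.swap hip) (hG.swap hip),
    star_sub, star_add, star_crossForm hip, star_crossForm hip, star_crossForm hip]

theorem isDual_dualOfDual (hip : IsHermitianForm ip) (hS : IsFrameOp μ ip F S)
    (hSinv : Function.LeftInverse S Sinv) (hFF : CrossIntegrable μ ip F F)
    (hGF : CrossIntegrable μ ip G F) (hdual : IsDual μ ip F G) :
    IsDual μ ip F (dualOfDual S Sinv F G) := fun f g => by
  have hSsymm := hS.isSymmetricWrt hip
  rw [← crossForm, crossForm_dualOfDual_left hip hSsymm (hSsymm.of_leftInverse hSinv) hFF hGF,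
    hS.crossForm_eq, hSinv f, hdual.crossForm_eq, hS.crossForm_eq, add_sub_cancel_right]

theorem crossForm_dualOfDual_self (hip : IsHermitianForm ip) (hS : IsFrameOp μ ip F S)
    (hSinv : Function.LeftInverse S Sinv) (hFF : CrossIntegrable μ ip F F)
    (hGF : CrossIntegrable μ ip G F) (hGG : CrossIntegrable μ ip G G) (hdual : IsDual μ ip F G)
    (f : E) :
    crossForm μ ip (dualOfDual S Sinv F G) (dualOfDual S Sinv F G) f f =
      ip f (Sinv f) + crossForm μ ip G G (S f) (S f) - ip (S f) f := by
  have hSsymm := hS.isSymmetricWrt hip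
  have hSinvsymm := hSsymm.of_leftInverse hSinv
  have hdual₂ := isDual_dualOfDual hip hS hSinv hFF hGF hdual
  have h₂F := CrossIntegrable.dualOfDual_left hip hSsymm hSinvsymm hFF hGF
  have h₂G := CrossIntegrable.dualOfDual_left hip hSsymm hSinvsymm (hGF.swap hip) hGG
  rw [crossForm_dualOfDual_right hip hSsymm hSinvsymm h₂F h₂G, hdual₂.crossForm_eq,
    hdual₂.crossForm_eq, crossForm_dualOfDual_left hip hSsymm hSinvsymm (hGF.swap hip) hGG,
    hdual.crossForm_swap_eq hip, hdual.crossForm_swap_eq hip, ← hSsymm (Sinv f) f, hSinv f,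
    ← hSsymm f f]
  abel

theorem isBessel_dualOfDual [PartialOrder 𝒜] [StarOrderedRing 𝒜] (hip : IsHermitianForm ip)
    (hpos : ∀ f, 0 ≤ ip f f) {a b B : ℝ} (hF : IsFrame μ ip F a b) (hS : IsFrameOp μ ip F S)
    (hSinv : Function.LeftInverse S Sinv) (hGF : CrossIntegrable μ ip G F)
    (hG : IsBessel μ ip G B) (hB : 0 ≤ B) (hdual : IsDual μ ip F G) :
    IsBessel μ ip (dualOfDual S Sinv F G) (a⁻¹ + B * (b * b)) := by
  obtain ⟨ha, hb, hFF, hFbd⟩ := hF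
  obtain ⟨hGG, hGbd⟩ := hG
  have hSsymm := hS.isSymmetricWrt hip
  have hSinvsymm := hSsymm.of_leftInverse hSinv
  have h₂F := CrossIntegrable.dualOfDual_left hip hSsymm hSinvsymm hFF hGF
  have h₂G := CrossIntegrable.dualOfDual_left hip hSsymm hSinvsymm (hGF.swap hip) hGG
  refine ⟨CrossIntegrable.dualOfDual_left hip hSsymm hSinvsymm (h₂F.swap hip) (h₂G.swap hip),
    fun f => ?_⟩
  have hGbd' : crossForm μ ip G G (S f) (S f) ≤ (B * (b * b)) • ip f f :=
    calc crossForm μ ip G G (S f) (S f) ≤ B • ip (S f) (S f) := hGbd (S f)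
      _ ≤ B • (b * b) • ip f f :=
        smul_le_smul_of_nonneg_left (hS.apply_apply_le hip hFF hb (fun f => (hFbd f).2) f) hB
      _ = (B * (b * b)) • ip f f := smul_smul _ _ _
  calc crossForm μ ip (dualOfDual S Sinv F G) (dualOfDual S Sinv F G) f f
      = ip f (Sinv f) + crossForm μ ip G G (S f) (S f) - ip (S f) f :=
        crossForm_dualOfDual_self hip hS hSinv hFF hGF hGG hdual f
    _ ≤ ip f (Sinv f) + crossForm μ ip G G (S f) (S f) :=
        sub_le_self _ (hS.crossForm_eq f f ▸ crossForm_self_nonneg hip f)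
    _ ≤ a⁻¹ • ip f f + (B * (b * b)) • ip f f :=
        add_le_add (apply_inv_le_inv_smul hip hpos hSinv ha
          (fun f => hS.crossForm_eq f f ▸ (hFbd f).1) f) hGbd'
    _ = (a⁻¹ + B * (b * b)) • ip f f := (add_smul _ _ _).symm

end DualOfDual

theorem dual_from_dual_general
    (μ : Measure Ω) (ip : U → U → A)
    (hip_add : ∀ f g h : U, ip (f + g) h = ip f h + ip g h)
    (hip_smul : ∀ (a : A) (f g : U), ip (a • f) g = a * ip f g)
    (hip_star : ∀ f g : U, star (ip f g) = ip g f)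
    (hip_pos : ∀ f : U, 0 ≤ ip f f)
    (hip_def : ∀ f : U, ip f f = 0 → f = 0)
    (F : Ω → U) (A₀ B₀ : ℝ) (hF : IsFrame μ ip F A₀ B₀)
    (S Sinv : U → U) (hS : IsFrameOp μ ip F S)
    (hSinv₂ : ∀ f, S (Sinv f) = f)
    (G₁ : Ω → U) (B₁ : ℝ) (hB₁ : 0 < B₁)
    (hG₁Bessel : IsBessel μ ip G₁ B₁) (hG₁dual : IsDual μ ip F G₁) :
    (∃ B₂ : ℝ, 0 < B₂ ∧
        IsBessel μ ip (fun ω => Sinv (F ω) + S (G₁ ω) - F ω) B₂) ∧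
      IsDual μ ip F (fun ω => Sinv (F ω) + S (G₁ ω) - F ω) := by
  have hip : IsHermitianForm ip := ⟨hip_add, hip_smul, hip_star⟩
  have hG₁F := hG₁dual.crossIntegrable hip hip_def
  have hB₂ : 0 < A₀⁻¹ + B₁ * (B₀ * B₀) :=
    add_pos_of_pos_of_nonneg (inv_pos.mpr hF.1) (mul_nonneg hB₁.le (mul_self_nonneg B₀))
  exact ⟨⟨_, hB₂, isBessel_dualOfDual hip hip_pos hF hS hSinv₂ hG₁F hG₁Bessel hB₁.le hG₁dual⟩,
    isDual_dualOfDual hip hS hSinv₂ hF.2.2.1 hG₁F hG₁dual⟩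

theorem dual_from_dual
    (μ : Measure Ω) (ip : U → U → A)
    (hip_add : ∀ f g h : U, ip (f + g) h = ip f h + ip g h)
    (hip_smul : ∀ (a : A) (f g : U), ip (a • f) g = a * ip f g)
    (hip_star : ∀ f g : U, star (ip f g) = ip g f)
    (hip_pos : ∀ f : U, 0 ≤ ip f f)
    (hip_def : ∀ f : U, ip f f = 0 → f = 0)
    (F : Ω → U) (A₀ B₀ : ℝ) (hF : IsFrame μ ip F A₀ B₀)
    (S Sinv : U → U) (hS : IsFrameOp μ ip F S)
    (hSinv₁ : ∀ f, Sinv (S f) = f) (hSinv₂ : ∀ f, S (Sinv f) = f)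
    (G₁ : Ω → U) (B₁ : ℝ) (hB₁ : 0 < B₁)
    (hG₁Bessel : IsBessel μ ip G₁ B₁) (hG₁dual : IsDual μ ip F G₁) :
    (∃ B₂ : ℝ, 0 < B₂ ∧
        IsBessel μ ip (fun ω => Sinv (F ω) + S (G₁ ω) - F ω) B₂) ∧
      IsDual μ ip F (fun ω => Sinv (F ω) + S (G₁ ω) - F ω) :=
  dual_from_dual_general μ ip hip_add hip_smul hip_star hip_pos hip_def F A₀ B₀ hF S Sinv hS hSinv₂
    G₁ B₁ hB₁ hG₁Bessel hG₁dual
end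
end

section
/- If F : Ω → U is a continuous frame with frame operator S_F and G is a dual of F, then for every i ∈ ℕ the mapping V_{i+1}(ω) = S_F⁻¹F(ω) + S_F^{i+1}G(ω) − S_F^{i}F(ω) is a dual of F. -/
open MeasureTheory

noncomputable section

variable {A : Type*} [CStarAlgebra A] [PartialOrder A] [StarOrderedRing A]
variable {U : Type*} [AddCommGroup U] [Module A U]
variable {Ω : Type*} [MeasurableSpace Ω]

theorem seq_of_duals
    (μ : Measure Ω) (ip : U → U → A)
    (hip_add : ∀ f g h : U, ip (f + g) h = ip f h + ip g h)
    (hip_smul : ∀ (a : A) (f g : U), ip (a • f) g = a * ip f g)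
    (hip_star : ∀ f g : U, star (ip f g) = ip g f)
    (hip_pos : ∀ f : U, 0 ≤ ip f f)
    (hip_def : ∀ f : U, ip f f = 0 → f = 0)
    (F : Ω → U) (A₀ B₀ : ℝ) (hF : IsFrame μ ip F A₀ B₀)
    (S Sinv : U → U) (hS : IsFrameOp μ ip F S)
    (hSinv₁ : ∀ f, Sinv (S f) = f) (hSinv₂ : ∀ f, S (Sinv f) = f)
    (G : Ω → U) (B₁ : ℝ) (hB₁ : 0 < B₁)
    (hGBessel : IsBessel μ ip G B₁) (hGdual : IsDual μ ip F G) :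
    ∀ i : ℕ,
      (∃ B' : ℝ, 0 < B' ∧
          IsBessel μ ip (fun ω => Sinv (F ω) + S^[i + 1] (G ω) - S^[i] (F ω)) B') ∧
        IsDual μ ip F (fun ω => Sinv (F ω) + S^[i + 1] (G ω) - S^[i] (F ω)) := by
    classical
  -- trivial algebraic consequences of the axioms for `ip`
  have h0l : ∀ g : U, ip 0 g = 0 := by
    intro g
    have h := hip_smul 0 g g
    rwa [zero_smul, zero_mul] at h
  have hnegl : ∀ f g : U, ip (-f) g = -ip f g := by
    intro f g
    have h := hip_smul (-1) f g
    rwa [neg_one_smul, neg_one_mul] at h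
  have hsubl : ∀ f g h : U, ip (f - g) h = ip f h - ip g h := by
    intro f g h
    rw [sub_eq_add_neg, hip_add, hnegl, ← sub_eq_add_neg]
  have haddr : ∀ f g h : U, ip f (g + h) = ip f g + ip f h := by
    intro f g h
    rw [← hip_star (g + h) f, hip_add, star_add, hip_star, hip_star]
  have hsubr : ∀ f g h : U, ip f (g - h) = ip f g - ip f h := by
    intro f g h
    rw [← hip_star (g - h) f, hsubl, star_sub, hip_star, hip_star]
  have hsmul_l : ∀ (t : ℝ) (x y : U), ip ((t • (1 : A)) • x) y = t • ip x y := by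
    intro t x y
    rw [hip_smul, smul_mul_assoc, one_mul]
  have hsmul_r : ∀ (t : ℝ) (x y : U), ip x ((t • (1 : A)) • y) = t • ip x y := by
    intro t x y
    rw [← hip_star ((t • (1 : A)) • y) x, hip_smul, star_mul, hip_star, star_smul,
      star_one, star_trivial, mul_smul_comm, mul_one]
  -- integral helpers
  have hstar_int : ∀ h : Ω → A, Integrable h μ → Integrable (fun ω => star (h ω)) μ :=
    fun h hh => ((starL' ℝ (A := A)).toContinuousLinearMap).integrable_comp hh
  have hint_star : ∀ h : Ω → A, Integrable h μ →
      ∫ ω, star (h ω) ∂μ = star (∫ ω, h ω ∂μ) :=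
    fun h hh => ((starL' ℝ (A := A)).toContinuousLinearMap).integral_comp_comm hh
  have hint_mul : ∀ (a : A) (h : Ω → A), Integrable h μ →
      ∫ ω, a * h ω ∂μ = a * ∫ ω, h ω ∂μ :=
    fun a h hh => (ContinuousLinearMap.mul ℝ A a).integral_comp_comm hh
  -- the frame operator is self-adjoint
  have hadj : ∀ f g : U, ip (S f) g = ip f (S g) := by
    intro f g
    rw [← hip_star (S g) f, hS g f, ← hint_star _ (hF.2.2.1 g f), hS f g]
    congr 1
    funext ω
    rw [star_mul, hip_star, hip_star]
  have hext : ∀ u v : U, (∀ z : U, ip u z = ip v z) → u = v := by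
    intro u v h
    have h2 : ip (u - v) (u - v) = 0 := by rw [hsubl, h, sub_self]
    have h3 := hip_def _ h2
    rwa [sub_eq_zero] at h3
  have hS_add : ∀ x y : U, S (x + y) = S x + S y := by
    intro x y
    apply hext
    intro z
    rw [hip_add, hS, hS, hS, ← integral_add (hF.2.2.1 x z) (hF.2.2.1 y z)]
    congr 1
    funext ω
    rw [hip_add, add_mul]
  have hS_smul : ∀ (a : A) (x : U), S (a • x) = a • S x := by
    intro a x
    apply hext
    intro z
    rw [hS, hip_smul, hS, ← hint_mul a _ (hF.2.2.1 x z)]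
    congr 1
    funext ω
    rw [hip_smul, mul_assoc]
  have hS_sub : ∀ x y : U, S (x - y) = S x - S y := by
    intro x y
    have e : x - y + y = x := by abel
    have h := hS_add (x - y) y
    rw [e] at h
    exact eq_sub_of_add_eq h.symm
  have hadj_inv : ∀ f g : U, ip (Sinv f) g = ip f (Sinv g) := by
    intro f g
    conv_lhs => rw [← hSinv₂ g]
    rw [← hadj, hSinv₂]
  have hadj_it : ∀ (k : ℕ) (f g : U), ip (S^[k] f) g = ip f (S^[k] g) := by
    intro k
    induction k with
    | zero => intro f g; simp
    | succ n ih =>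
      intro f g
      rw [Function.iterate_succ_apply' S n f, hadj, ih, ← Function.iterate_succ_apply S n g]
  -- mixed integrability
  have hGF_key : ∀ h g : U, ip h g ≠ 0 → Integrable (fun ω => ip h (G ω) * ip (F ω) g) μ := by
    intro h g hne
    by_contra hni
    exact hne (by rw [← hGdual h g, integral_undef hni])
  have hGF_int : ∀ h g : U, Integrable (fun ω => ip h (G ω) * ip (F ω) g) μ := by
    intro h g
    by_cases hh : h = 0
    · subst hh
      simp only [h0l, zero_mul]
      exact integrable_zero _ _ _
    · by_cases hg : ip h g = 0
      · have hhh : ip h h ≠ 0 := fun e => hh (hip_def h e)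
        have h1 := hGF_key h (g + h) (by rw [haddr, hg, zero_add]; exact hhh)
        have h2 := hGF_key h h hhh
        have heq : (fun ω => ip h (G ω) * ip (F ω) g)
            = fun ω => ip h (G ω) * ip (F ω) (g + h) - ip h (G ω) * ip (F ω) h := by
          funext ω
          rw [haddr, mul_add, add_sub_cancel_right]
        rw [heq]
        exact h1.sub h2
      · exact hGF_key h g hg
  have hFG_eq : ∀ h g : U, (fun ω => ip h (F ω) * ip (G ω) g)
      = fun ω => star (ip g (G ω) * ip (F ω) h) := by
    intro h g
    funext ω
    rw [star_mul, hip_star, hip_star]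
  have hFG_int : ∀ h g : U, Integrable (fun ω => ip h (F ω) * ip (G ω) g) μ := by
    intro h g
    rw [hFG_eq]
    exact hstar_int _ (hGF_int g h)
  have hFG_val : ∀ h g : U, ∫ ω, ip h (F ω) * ip (G ω) g ∂μ = ip h g := by
    intro h g
    rw [hFG_eq, hint_star _ (hGF_int g h), hGdual g h, hip_star]
  -- order helpers
  have hsmul_le : ∀ (s : ℝ), 0 ≤ s → ∀ x y : A, x ≤ y → s • x ≤ s • y := by
    intro s hs x y hxy
    have h := smul_nonneg hs (sub_nonneg.mpr hxy)
    rw [smul_sub] at h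
    exact sub_nonneg.mp h
  have hexp : ∀ (t : ℝ) (x y : U),
      ip (x - (t • (1 : A)) • y) (x - (t • (1 : A)) • y)
        = ip x x - t • ip x y - t • ip y x + (t * t) • ip y y := by
    intro t x y
    simp only [hsubl, hsubr, hsmul_l, hsmul_r]
    module
  have hA0 : (0 : ℝ) < A₀ := hF.1
  have hB0 : (0 : ℝ) < B₀ := hF.2.1
  have hlow : ∀ f : U, A₀ • ip f f ≤ ip (S f) f := by
    intro f
    rw [hS]
    exact (hF.2.2.2 f).1
  have hup : ∀ f : U, ip (S f) f ≤ B₀ • ip f f := by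
    intro f
    rw [hS]
    exact (hF.2.2.2 f).2
  have hinvbound : ∀ f : U, ip f (Sinv f) ≤ A₀⁻¹ • ip f f := by
    intro f
    have hpf : ip (Sinv f) f = ip f (Sinv f) := hadj_inv f f
    have h1 : A₀ • ip (Sinv f) (Sinv f) ≤ ip f (Sinv f) := by
      have h := hlow (Sinv f)
      rwa [hSinv₂] at h
    have h2 : ip (Sinv f) (Sinv f) ≤ A₀⁻¹ • ip f (Sinv f) := by
      have h := hsmul_le A₀⁻¹ (by positivity) _ _ h1
      rwa [smul_smul, inv_mul_cancel₀ (ne_of_gt hA0), one_smul] at h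
    have e1 : 0 ≤ ip (Sinv f) (Sinv f) - A₀⁻¹ • ip (Sinv f) f - A₀⁻¹ • ip f (Sinv f)
        + (A₀⁻¹ * A₀⁻¹) • ip f f := by
      rw [← hexp A₀⁻¹ (Sinv f) f]
      exact hip_pos _
    have e2 : (0 : A) ≤ A₀⁻¹ • ip f (Sinv f) - ip (Sinv f) (Sinv f) := sub_nonneg.mpr h2
    have e3 : (0 : A) ≤ (A₀⁻¹ * A₀⁻¹) • ip f f - A₀⁻¹ • ip f (Sinv f) := by
      have h := add_nonneg e1 e2
      have heq : (ip (Sinv f) (Sinv f) - A₀⁻¹ • ip (Sinv f) f - A₀⁻¹ • ip f (Sinv f)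
          + (A₀⁻¹ * A₀⁻¹) • ip f f) + (A₀⁻¹ • ip f (Sinv f) - ip (Sinv f) (Sinv f))
          = (A₀⁻¹ * A₀⁻¹) • ip f f - A₀⁻¹ • ip f (Sinv f) := by
        rw [hpf]
        module
      rwa [heq] at h
    have e4 := hsmul_le A₀ hA0.le _ _ (sub_nonneg.mp e3)
    rw [smul_smul, smul_smul, mul_inv_cancel₀ (ne_of_gt hA0), one_smul,
      show A₀ * (A₀⁻¹ * A₀⁻¹) = A₀⁻¹ by field_simp] at e4
    exact e4
  have hSS : ∀ g : U, ip (S g) (S g) ≤ (B₀ * B₀) • ip g g := by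
    intro g
    have e0 : A₀ • ip (S g - (B₀ • (1 : A)) • g) (S g - (B₀ • (1 : A)) • g)
        ≤ ip (S (S g - (B₀ • (1 : A)) • g)) (S g - (B₀ • (1 : A)) • g) := hlow _
    rw [hS_sub, hS_smul] at e0
    simp only [hsubl, hsubr, hsmul_l, hsmul_r] at e0
    rw [hadj (S g) g, show ip g (S g) = ip (S g) g from (hadj g g).symm] at e0
    have n1 := sub_nonneg.mpr e0
    have n2 : (0 : A) ≤ B₀ • ip (S g) (S g) - ip (S (S g)) (S g) := sub_nonneg.mpr (hup (S g))
    have n3 : (0 : A) ≤ (B₀ * B₀ + 2 * A₀ * B₀) • (B₀ • ip g g - ip (S g) g) :=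
      smul_nonneg (by positivity) (sub_nonneg.mpr (hup g))
    have hN : (0 : A) ≤ (A₀ + B₀) • ((B₀ * B₀) • ip g g) - (A₀ + B₀) • ip (S g) (S g) := by
      refine le_trans (add_nonneg (add_nonneg n1 n2) n3) (le_of_eq ?_)
      module
    have h := hsmul_le (A₀ + B₀)⁻¹ (by positivity) _ _ (sub_nonneg.mp hN)
    rwa [smul_smul, smul_smul, inv_mul_cancel₀ (by positivity : (A₀ + B₀) ≠ 0), one_smul,
      one_smul] at h
  have hiter : ∀ (k : ℕ) (g : U), ip (S^[k] g) (S^[k] g) ≤ (B₀ ^ (2 * k)) • ip g g := by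
    intro k
    induction k with
    | zero => intro g; simp
    | succ n ih =>
      intro g
      rw [Function.iterate_succ_apply' S n g]
      calc ip (S (S^[n] g)) (S (S^[n] g)) ≤ (B₀ * B₀) • ip (S^[n] g) (S^[n] g) := hSS _
        _ ≤ (B₀ * B₀) • ((B₀ ^ (2 * n)) • ip g g) :=
            hsmul_le _ (by positivity) _ _ (ih g)
        _ = (B₀ ^ (2 * (n + 1))) • ip g g := by
            rw [smul_smul]
            congr 1
            ring
  -- main statement
  intro i
  have hVl : ∀ (f : U) (ω : Ω), ip f (Sinv (F ω) + S^[i + 1] (G ω) - S^[i] (F ω))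
      = ip (Sinv f) (F ω) + ip (S^[i + 1] f) (G ω) - ip (S^[i] f) (F ω) := by
    intro f ω
    rw [hsubr, haddr, ← hadj_inv, ← hadj_it, ← hadj_it]
  have hVr : ∀ (g : U) (ω : Ω), ip (Sinv (F ω) + S^[i + 1] (G ω) - S^[i] (F ω)) g
      = ip (F ω) (Sinv g) + ip (G ω) (S^[i + 1] g) - ip (F ω) (S^[i] g) := by
    intro g ω
    rw [← hip_star g, hVl, star_sub, star_add, hip_star, hip_star, hip_star]
  have hsplit : ∀ f g : U,
      (fun ω => ip f (Sinv (F ω) + S^[i + 1] (G ω) - S^[i] (F ω))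
        * ip (Sinv (F ω) + S^[i + 1] (G ω) - S^[i] (F ω)) g)
      = fun ω =>
        ((ip (Sinv f) (F ω) * ip (F ω) (Sinv g)
            + ip (Sinv f) (F ω) * ip (G ω) (S^[i + 1] g))
          - ip (Sinv f) (F ω) * ip (F ω) (S^[i] g))
        + ((ip (S^[i + 1] f) (G ω) * ip (F ω) (Sinv g)
            + ip (S^[i + 1] f) (G ω) * ip (G ω) (S^[i + 1] g))
          - ip (S^[i + 1] f) (G ω) * ip (F ω) (S^[i] g))
        - ((ip (S^[i] f) (F ω) * ip (F ω) (Sinv g)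
            + ip (S^[i] f) (F ω) * ip (G ω) (S^[i + 1] g))
          - ip (S^[i] f) (F ω) * ip (F ω) (S^[i] g)) := by
    intro f g
    funext ω
    rw [hVl, hVr]
    noncomm_ring
  have hdual : IsDual μ ip F (fun ω => Sinv (F ω) + S^[i + 1] (G ω) - S^[i] (F ω)) := by
    intro f g
    have hpt : (fun ω => ip f (Sinv (F ω) + S^[i + 1] (G ω) - S^[i] (F ω)) * ip (F ω) g)
        = fun ω => (ip (Sinv f) (F ω) * ip (F ω) g + ip (S^[i + 1] f) (G ω) * ip (F ω) g)
            - ip (S^[i] f) (F ω) * ip (F ω) g := by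
      funext ω
      rw [hVl]
      noncomm_ring
    have j1 : Integrable (fun ω => ip (Sinv f) (F ω) * ip (F ω) g
        + ip (S^[i + 1] f) (G ω) * ip (F ω) g) μ :=
      (hF.2.2.1 (Sinv f) g).add (hGF_int (S^[i + 1] f) g)
    rw [hpt, integral_sub j1 (hF.2.2.1 (S^[i] f) g),
      integral_add (hF.2.2.1 (Sinv f) g) (hGF_int (S^[i + 1] f) g), ← hS, ← hS, hSinv₂,
      hGdual, ← Function.iterate_succ_apply' S i f]
    abel
  refine ⟨⟨A₀⁻¹ + B₁ * B₀ ^ (2 * (i + 1)),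
    add_pos (inv_pos.mpr hA0) (mul_pos hB₁ (pow_pos hB0 _)), ?_, ?_⟩, hdual⟩
  · -- integrability
    intro f g
    rw [hsplit f g]
    exact ((((hF.2.2.1 _ _).add (hFG_int _ _)).sub (hF.2.2.1 _ _)).add
        (((hGF_int _ _).add (hGBessel.1 _ _)).sub (hGF_int _ _))).sub
      ((((hF.2.2.1 _ _).add (hFG_int _ _)).sub (hF.2.2.1 _ _)))
  · -- the Bessel bound
    intro f
    have i1 := hF.2.2.1 (Sinv f) (Sinv f)
    have i2 := hFG_int (Sinv f) (S^[i + 1] f)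
    have i3 := hF.2.2.1 (Sinv f) (S^[i] f)
    have i4 := hGF_int (S^[i + 1] f) (Sinv f)
    have i5 := hGBessel.1 (S^[i + 1] f) (S^[i + 1] f)
    have i6 := hGF_int (S^[i + 1] f) (S^[i] f)
    have i7 := hF.2.2.1 (S^[i] f) (Sinv f)
    have i8 := hFG_int (S^[i] f) (S^[i + 1] f)
    have i9 := hF.2.2.1 (S^[i] f) (S^[i] f)
    have j12 : Integrable (fun ω => ip (Sinv f) (F ω) * ip (F ω) (Sinv f)
        + ip (Sinv f) (F ω) * ip (G ω) (S^[i + 1] f)) μ := i1.add i2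
    have j123 : Integrable (fun ω => ip (Sinv f) (F ω) * ip (F ω) (Sinv f)
        + ip (Sinv f) (F ω) * ip (G ω) (S^[i + 1] f)
        - ip (Sinv f) (F ω) * ip (F ω) (S^[i] f)) μ := j12.sub i3
    have j45 : Integrable (fun ω => ip (S^[i + 1] f) (G ω) * ip (F ω) (Sinv f)
        + ip (S^[i + 1] f) (G ω) * ip (G ω) (S^[i + 1] f)) μ := i4.add i5
    have j456 : Integrable (fun ω => ip (S^[i + 1] f) (G ω) * ip (F ω) (Sinv f)
        + ip (S^[i + 1] f) (G ω) * ip (G ω) (S^[i + 1] f)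
        - ip (S^[i + 1] f) (G ω) * ip (F ω) (S^[i] f)) μ := j45.sub i6
    have j78 : Integrable (fun ω => ip (S^[i] f) (F ω) * ip (F ω) (Sinv f)
        + ip (S^[i] f) (F ω) * ip (G ω) (S^[i + 1] f)) μ := i7.add i8
    have j789 : Integrable (fun ω => ip (S^[i] f) (F ω) * ip (F ω) (Sinv f)
        + ip (S^[i] f) (F ω) * ip (G ω) (S^[i + 1] f)
        - ip (S^[i] f) (F ω) * ip (F ω) (S^[i] f)) μ := j78.sub i9
    have jsum : Integrable (fun ω =>
        (ip (Sinv f) (F ω) * ip (F ω) (Sinv f)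
          + ip (Sinv f) (F ω) * ip (G ω) (S^[i + 1] f)
          - ip (Sinv f) (F ω) * ip (F ω) (S^[i] f))
        + (ip (S^[i + 1] f) (G ω) * ip (F ω) (Sinv f)
          + ip (S^[i + 1] f) (G ω) * ip (G ω) (S^[i + 1] f)
          - ip (S^[i + 1] f) (G ω) * ip (F ω) (S^[i] f))) μ := j123.add j456
    rw [hsplit f f,
      integral_sub jsum j789,
      integral_add j123 j456,
      integral_sub j12 i3, integral_add i1 i2,
      integral_sub j45 i6, integral_add i4 i5,
      integral_sub j78 i9, integral_add i7 i8,
      ← hS, ← hS, ← hS, ← hS, hFG_val, hFG_val, hGdual, hGdual, hSinv₂,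
      ← Function.iterate_succ_apply' S i f]
    have hc1 : ip (Sinv f) (S^[i + 1] f) = ip f (S^[i] f) := by
      rw [hadj_inv, Function.iterate_succ_apply' S i f, hSinv₁]
    have hc2 : ip (S^[i] f) (S^[i + 1] f) = ip (S^[i + 1] f) (S^[i] f) := by
      conv_lhs => rw [Function.iterate_succ_apply' S i f]
      rw [← hadj, ← Function.iterate_succ_apply' S i f]
    rw [hc1, hc2]
    have hb3 : (0 : A) ≤ ip (S^[i + 1] f) (S^[i] f) := by
      rw [Function.iterate_succ_apply' S i f]
      exact le_trans (smul_nonneg hA0.le (hip_pos _)) (hlow _)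
    have hb2 : ∫ ω, ip (S^[i + 1] f) (G ω) * ip (G ω) (S^[i + 1] f) ∂μ
        ≤ (B₁ * B₀ ^ (2 * (i + 1))) • ip f f := by
      calc ∫ ω, ip (S^[i + 1] f) (G ω) * ip (G ω) (S^[i + 1] f) ∂μ
          ≤ B₁ • ip (S^[i + 1] f) (S^[i + 1] f) := hGBessel.2 _
        _ ≤ B₁ • ((B₀ ^ (2 * (i + 1))) • ip f f) :=
            hsmul_le _ hB₁.le _ _ (hiter (i + 1) f)
        _ = (B₁ * B₀ ^ (2 * (i + 1))) • ip f f := by rw [smul_smul]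
    calc ip f (Sinv f) + ip f (S^[i] f) - ip f (S^[i] f)
          + (ip (S^[i + 1] f) (Sinv f)
            + (∫ ω, ip (S^[i + 1] f) (G ω) * ip (G ω) (S^[i + 1] f) ∂μ)
            - ip (S^[i + 1] f) (S^[i] f))
          - (ip (S^[i + 1] f) (Sinv f) + ip (S^[i + 1] f) (S^[i] f)
            - ip (S^[i + 1] f) (S^[i] f))
        = ip f (Sinv f) + (∫ ω, ip (S^[i + 1] f) (G ω) * ip (G ω) (S^[i + 1] f) ∂μ)
            - ip (S^[i + 1] f) (S^[i] f) := by abel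
      _ ≤ A₀⁻¹ • ip f f + (B₁ * B₀ ^ (2 * (i + 1))) • ip f f - 0 :=
          sub_le_sub (add_le_add (hinvbound f) hb2) hb3
      _ = (A₀⁻¹ + B₁ * B₀ ^ (2 * (i + 1))) • ip f f := by rw [sub_zero, ← add_smul]
end
end

section
/- Let F : Ω → U be a continuous frame with frame operator S and let G be a dual of F. Then G equals the canonical dual S⁻¹F (i.e., G(ω) = S⁻¹F(ω) for all ω) if and only if ⟨F(ω), G(γ)⟩ = ⟨G(ω), F(γ)⟩ for all ω, γ ∈ Ω. -/
open MeasureTheory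

noncomputable section

variable {A : Type*} [CStarAlgebra A] [PartialOrder A] [StarOrderedRing A]
variable {U : Type*} [AddCommGroup U] [Module A U]
variable {Ω : Type*} [MeasurableSpace Ω]

theorem canonical_dual_iff_symm
    (μ : Measure Ω) (ip : U → U → A)
    (hip_add : ∀ f g h : U, ip (f + g) h = ip f h + ip g h)
    (hip_smul : ∀ (a : A) (f g : U), ip (a • f) g = a * ip f g)
    (hip_star : ∀ f g : U, star (ip f g) = ip g f)
    (hip_pos : ∀ f : U, 0 ≤ ip f f)
    (hip_def : ∀ f : U, ip f f = 0 → f = 0)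
    (F : Ω → U) (A₀ B₀ : ℝ) (hF : IsFrame μ ip F A₀ B₀)
    (S Sinv : U → U) (hS : IsFrameOp μ ip F S)
    (hSinv₁ : ∀ f, Sinv (S f) = f) (hSinv₂ : ∀ f, S (Sinv f) = f)
    (G : Ω → U) (B₁ : ℝ) (hB₁ : 0 < B₁)
    (hGBessel : IsBessel μ ip G B₁) (hGdual : IsDual μ ip F G) :
    (∀ ω : Ω, G ω = Sinv (F ω)) ↔
      ∀ ω γ : Ω, ip (F ω) (G γ) = ip (G ω) (F γ) := by

  -- star of an integral
  have hstar_int : ∀ (k : Ω → A), star (∫ ω, k ω ∂μ) = ∫ ω, star (k ω) ∂μ := by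
    intro k
    have := (starL' ℝ : A ≃L[ℝ] A).integral_comp_comm (μ := μ) k
    simpa using this.symm
  -- self-adjointness of S
  have Sself : ∀ f g : U, ip (S f) g = ip f (S g) := by
    intro f g
    have : ip f (S g) = star (ip (S g) f) := (hip_star (S g) f).symm
    rw [this, hS g f, hstar_int]
    rw [hS f g]
    congr 1
    funext ω
    rw [star_mul, hip_star, hip_star]
  -- self-adjointness of Sinv
  have Sinvself : ∀ f g : U, ip (Sinv f) g = ip f (Sinv g) := by
    intro f g
    calc ip (Sinv f) g = ip (Sinv f) (S (Sinv g)) := by rw [hSinv₂]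
      _ = ip (S (Sinv f)) (Sinv g) := (Sself _ _).symm
      _ = ip f (Sinv g) := by rw [hSinv₂]
  constructor
  · intro h ω γ
    rw [h ω, h γ]
    exact (Sinvself (F ω) (F γ)).symm
  · intro hsym γ
    -- reversed duality
    have revdual : ∀ f g : U, ∫ ω, ip f (F ω) * ip (G ω) g ∂μ = ip f g := by
      intro f g
      have h1 := hGdual g f
      have h2 := congrArg star h1
      rw [hstar_int, hip_star] at h2
      rw [← h2]
      congr 1
      funext ω
      rw [star_mul, hip_star, hip_star]
    have key : ∀ f : U, ip f (G γ) = ip f (Sinv (F γ)) := by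
      intro f
      have h1 : ip (S (Sinv f)) (G γ) = ip (S (Sinv f)) (Sinv (F γ)) := by
        rw [hS (Sinv f) (G γ)]
        have he : ∫ ω, ip (Sinv f) (F ω) * ip (F ω) (G γ) ∂μ
            = ∫ ω, ip (Sinv f) (F ω) * ip (G ω) (F γ) ∂μ := by
          congr 1
          funext ω
          rw [hsym ω γ]
        rw [he, revdual (Sinv f) (F γ), Sself (Sinv f), hSinv₂]
      rwa [hSinv₂] at h1
    -- first-argument sub-linearity
    have negL : ∀ f g : U, ip (-f) g = -(ip f g) := by
      intro f g
      rw [← neg_one_smul A f, hip_smul, neg_one_mul]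
    have subL : ∀ f g h : U, ip (f - g) h = ip f h - ip g h := by
      intro f g h
      rw [sub_eq_add_neg, hip_add, negL, ← sub_eq_add_neg]
    set d := G γ - Sinv (F γ) with hd
    have hdd : ip d d = 0 := by
      rw [hd]
      nth_rewrite 1 [subL]
      rw [← hip_star d (G γ), ← hip_star d (Sinv (F γ)), key d, sub_self]
    have := hip_def d hdd
    rw [hd] at this
    exact sub_eq_zero.mp this
end
end

section
/- In the optimality direction: if F is a continuous frame with frame operator S_F and D is any dual of F, then for every f ∈ U, ∫_Ω ⟨f,D(ω)⟩⟨D(ω),f⟩ dμ(ω) = ∫_Ω ⟨f,D(ω)−S_F⁻¹F(ω)⟩⟨D(ω)−S_F⁻¹F(ω),f⟩ dμ(ω) + ∫_Ω ⟨f,S_F⁻¹F(ω)⟩⟨S_F⁻¹F(ω),f⟩ dμ(ω); in particular ⟨S_{S_F⁻¹F} f, f⟩ ≤ ⟨S_D f, f⟩. -/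
open MeasureTheory

noncomputable section

variable {A : Type*} [CStarAlgebra A] [PartialOrder A] [StarOrderedRing A]
variable {U : Type*} [AddCommGroup U] [Module A U]
variable {Ω : Type*} [MeasurableSpace Ω]

/-- The Bochner integral of an everywhere-nonnegative integrable function with values in a
C⋆-algebra is nonnegative. -/
lemma integral_nonneg_cstar {μ : Measure Ω} {g : Ω → A}
    (hg : Integrable g μ) (hpos : ∀ ω, 0 ≤ g ω) : 0 ≤ ∫ ω, g ω ∂μ := by
  by_contra hc
  have hs_conv : Convex ℝ {x : A | 0 ≤ x} := fun x hx y hy a b ha hb _ =>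
    add_nonneg (smul_nonneg ha hx) (smul_nonneg hb hy)
  obtain ⟨φ, u, hu₁, hu₂⟩ :=
    geometric_hahn_banach_closed_point (x := ∫ ω, g ω ∂μ) hs_conv CStarAlgebra.isClosed_nonneg hc
  have h0 : (0 : ℝ) < u := by simpa using hu₁ 0 (le_refl (0 : A))
  have hφ : ∀ ω, φ (g ω) ≤ 0 := by
    intro ω
    by_contra hpos'
    push_neg at hpos'
    have ht : (0 : ℝ) ≤ (u + 1) / φ (g ω) := by positivity
    have := hu₁ (((u + 1) / φ (g ω)) • g ω) (smul_nonneg ht (hpos ω))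
    rw [ContinuousLinearMap.map_smul, smul_eq_mul, div_mul_cancel₀ _ (ne_of_gt hpos')] at this
    linarith only [this]
  have hle : φ (∫ ω, g ω ∂μ) ≤ 0 := by
    rw [← φ.integral_comp_comm hg]
    exact integral_nonpos hφ
  linarith only [hle, hu₂, h0]

theorem canonical_dual_optimality
    (μ : Measure Ω) (ip : U → U → A)
    (hip_add : ∀ f g h : U, ip (f + g) h = ip f h + ip g h)
    (hip_smul : ∀ (a : A) (f g : U), ip (a • f) g = a * ip f g)
    (hip_star : ∀ f g : U, star (ip f g) = ip g f)
    (hip_pos : ∀ f : U, 0 ≤ ip f f)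
    (hip_def : ∀ f : U, ip f f = 0 → f = 0)
    (F : Ω → U) (A₀ B₀ : ℝ) (hF : IsFrame μ ip F A₀ B₀)
    (S Sinv : U → U) (hS : IsFrameOp μ ip F S)
    (hSinv₁ : ∀ f, Sinv (S f) = f) (hSinv₂ : ∀ f, S (Sinv f) = f)
    (D : Ω → U) (B_D : ℝ) (hB_D : 0 < B_D)
    (hDBessel : IsBessel μ ip D B_D) (hDdual : IsDual μ ip F D) :
    ∀ f : U,
      (∫ ω, ip f (D ω) * ip (D ω) f ∂μ =
        ∫ ω, ip f (D ω - Sinv (F ω)) * ip (D ω - Sinv (F ω)) f ∂μ +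
          ∫ ω, ip f (Sinv (F ω)) * ip (Sinv (F ω)) f ∂μ) ∧
      ∫ ω, ip f (Sinv (F ω)) * ip (Sinv (F ω)) f ∂μ ≤
        ∫ ω, ip f (D ω) * ip (D ω) f ∂μ := by
  obtain ⟨hA₀, hB₀, hFint, hFbd⟩ := hF
  -- basic facts about ip
  have ip_zero_left : ∀ g : U, ip 0 g = 0 := by
    intro g
    have h : ip 0 g = ip 0 g + ip 0 g := by rw [← hip_add]; rw [add_zero]
    exact (left_eq_add.mp h)
  have ip_neg_left : ∀ f g : U, ip (-f) g = -ip f g := by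
    intro f g
    rw [← neg_one_smul A f, hip_smul, neg_one_mul]
  have ip_sub_left : ∀ f g h : U, ip (f - g) h = ip f h - ip g h := by
    intro f g h
    rw [sub_eq_add_neg, hip_add, ip_neg_left, sub_eq_add_neg]
  have ip_sub_right : ∀ f g h : U, ip f (g - h) = ip f g - ip f h := by
    intro f g h
    rw [← hip_star (g - h) f, ip_sub_left, star_sub, hip_star, hip_star]
  -- star of integrals
  have star_integral : ∀ v : Ω → A, star (∫ ω, v ω ∂μ) = ∫ ω, star (v ω) ∂μ := by
    intro v
    exact ((starL' ℝ : A ≃L[ℝ] A).integral_comp_comm v).symm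
  -- S is self-adjoint
  have hSsa : ∀ f g : U, ip (S f) g = ip f (S g) := by
    intro f g
    rw [hS f g, ← hip_star (S g) f, hS g f, star_integral]
    congr 1
    funext ω
    rw [star_mul, hip_star, hip_star]
  have hSinvsa : ∀ a b : U, ip (Sinv a) b = ip a (Sinv b) := by
    intro a b
    conv_lhs => rw [← hSinv₂ b]
    rw [← hSsa, hSinv₂]
  have hS0 : S 0 = 0 := by
    refine hip_def _ ?_
    rw [hS]
    simp [ip_zero_left]
  intro f
  by_cases hf0 : f = 0
  · subst hf0
    have hz : ∀ G : Ω → U, ∫ ω, ip 0 (G ω) * ip (G ω) 0 ∂μ = 0 := by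
      intro G
      simp only [ip_zero_left, zero_mul, integral_zero]
    constructor
    · rw [hz, hz, hz, add_zero]
    · rw [hz, hz]
  · have hSh : S (Sinv f) = f := hSinv₂ f
    have e_fSinv : ∀ x : U, ip f (Sinv x) = ip (Sinv f) x := by
      intro x
      rw [← hip_star (Sinv x) f, hSinvsa, hip_star]
    have e_Sinvf : ∀ x : U, ip (Sinv x) f = ip x (Sinv f) := by
      intro x
      rw [hSinvsa]
    -- the "canonical" term Q
    have hQint : Integrable (fun ω => ip f (Sinv (F ω)) * ip (Sinv (F ω)) f) μ := by
      simpa only [e_fSinv, e_Sinvf] using hFint (Sinv f) (Sinv f)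
    have hQval : ∫ ω, ip f (Sinv (F ω)) * ip (Sinv (F ω)) f ∂μ = ip f (Sinv f) := by
      have : (fun ω => ip f (Sinv (F ω)) * ip (Sinv (F ω)) f)
          = fun ω => ip (Sinv f) (F ω) * ip (F ω) (Sinv f) := by
        funext ω
        rw [e_fSinv, e_Sinvf]
      rw [this, ← hS (Sinv f) (Sinv f), hSh]
    -- ip f (Sinv f) is nonzero
    have hipfh : ip f (Sinv f) ≠ 0 := by
      intro hz
      have h1 : A₀ • ip (Sinv f) (Sinv f) ≤ ip f (Sinv f) := by
        have h1' := (hFbd (Sinv f)).1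
        rwa [← hS (Sinv f) (Sinv f), hSh] at h1'
      rw [hz] at h1
      have h2 : (0 : A) ≤ A₀ • ip (Sinv f) (Sinv f) :=
        smul_nonneg hA₀.le (hip_pos (Sinv f))
      have h3 : A₀ • ip (Sinv f) (Sinv f) = 0 := le_antisymm h1 h2
      have h4 : ip (Sinv f) (Sinv f) = 0 := (smul_eq_zero.mp h3).resolve_left (ne_of_gt hA₀)
      have h5 : Sinv f = 0 := hip_def _ h4
      apply hf0
      rw [← hSh, h5, hS0]
    -- the mixed term m
    have hmval : ∫ ω, ip f (D ω) * ip (F ω) (Sinv f) ∂μ = ip f (Sinv f) := hDdual f (Sinv f)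
    have hmint : Integrable (fun ω => ip f (D ω) * ip (F ω) (Sinv f)) μ := by
      by_contra hni
      rw [integral_undef hni] at hmval
      exact hipfh hmval.symm
    -- the first cross term c1
    have c1eq : (fun ω => ip f (D ω - Sinv (F ω)) * ip (Sinv (F ω)) f)
        = fun ω => ip f (D ω) * ip (F ω) (Sinv f)
            - ip (Sinv f) (F ω) * ip (F ω) (Sinv f) := by
      funext ω
      rw [ip_sub_right, e_fSinv, e_Sinvf, sub_mul]
    have hc1int : Integrable (fun ω => ip f (D ω - Sinv (F ω)) * ip (Sinv (F ω)) f) μ := by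
      rw [c1eq]
      exact hmint.sub (hFint (Sinv f) (Sinv f))
    have hc1val : ∫ ω, ip f (D ω - Sinv (F ω)) * ip (Sinv (F ω)) f ∂μ = 0 := by
      rw [c1eq, integral_sub hmint (hFint (Sinv f) (Sinv f)), hmval]
      have : ∫ ω, ip (Sinv f) (F ω) * ip (F ω) (Sinv f) ∂μ = ip f (Sinv f) := by
        rw [← hS (Sinv f) (Sinv f), hSh]
      rw [this, sub_self]
    -- the second cross term c2
    have c2eq : (fun ω => ip f (Sinv (F ω)) * ip (D ω - Sinv (F ω)) f)
        = fun ω => star (ip f (D ω - Sinv (F ω)) * ip (Sinv (F ω)) f) := by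
      funext ω
      rw [star_mul, hip_star, hip_star]
    have hc2int : Integrable (fun ω => ip f (Sinv (F ω)) * ip (D ω - Sinv (F ω)) f) μ := by
      rw [c2eq]
      exact ((starL' ℝ : A ≃L[ℝ] A).integrable_comp_iff).mpr hc1int
    have hc2val : ∫ ω, ip f (Sinv (F ω)) * ip (D ω - Sinv (F ω)) f ∂μ = 0 := by
      rw [c2eq, ← star_integral, hc1val, star_zero]
    -- expansion of the main term
    have hTint : Integrable (fun ω => ip f (D ω) * ip (D ω) f) μ := hDBessel.1 f f
    have Pexp : (fun ω => ip f (D ω - Sinv (F ω)) * ip (D ω - Sinv (F ω)) f)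
        = fun ω => ip f (D ω) * ip (D ω) f
            - ip f (D ω - Sinv (F ω)) * ip (Sinv (F ω)) f
            - ip f (Sinv (F ω)) * ip (D ω - Sinv (F ω)) f
            - ip f (Sinv (F ω)) * ip (Sinv (F ω)) f := by
      funext ω
      rw [ip_sub_right, ip_sub_left]
      noncomm_ring
    have hsub1 : Integrable (fun ω => ip f (D ω) * ip (D ω) f
        - ip f (D ω - Sinv (F ω)) * ip (Sinv (F ω)) f) μ := hTint.sub hc1int
    have hsub2 : Integrable (fun ω => ip f (D ω) * ip (D ω) f
        - ip f (D ω - Sinv (F ω)) * ip (Sinv (F ω)) f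
        - ip f (Sinv (F ω)) * ip (D ω - Sinv (F ω)) f) μ := hsub1.sub hc2int
    have hPint : Integrable (fun ω => ip f (D ω - Sinv (F ω)) * ip (D ω - Sinv (F ω)) f) μ := by
      rw [Pexp]
      exact hsub2.sub hQint
    have hPval : ∫ ω, ip f (D ω - Sinv (F ω)) * ip (D ω - Sinv (F ω)) f ∂μ
        = ∫ ω, ip f (D ω) * ip (D ω) f ∂μ
          - ∫ ω, ip f (Sinv (F ω)) * ip (Sinv (F ω)) f ∂μ := by
      rw [Pexp, integral_sub hsub2 hQint, integral_sub hsub1 hc2int, integral_sub hTint hc1int,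
        hc1val, hc2val, sub_zero, sub_zero]
    have claim1 : ∫ ω, ip f (D ω) * ip (D ω) f ∂μ =
        ∫ ω, ip f (D ω - Sinv (F ω)) * ip (D ω - Sinv (F ω)) f ∂μ +
          ∫ ω, ip f (Sinv (F ω)) * ip (Sinv (F ω)) f ∂μ := by
      rw [hPval]
      abel
    refine ⟨claim1, ?_⟩
    have hPnonneg : (0 : A) ≤ ∫ ω, ip f (D ω - Sinv (F ω)) * ip (D ω - Sinv (F ω)) f ∂μ := by
      refine integral_nonneg_cstar hPint ?_
      intro ω
      rw [← hip_star (D ω - Sinv (F ω)) f]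
      exact star_mul_self_nonneg _
    rw [claim1]
    exact le_add_of_nonneg_left hPnonneg
end
end

section
/- Let F : Ω → U be a continuous frame with bounds A_F, B_F and G a dual of F with Bessel bound B_G. If L₁, L₂ are adjointable operators on U with L₁L₂* = I_U, then ω ↦ L₁F(ω) + L₂G(ω) is a continuous frame for U with lower bound 2 and upper bound B_F M₁ + 2 + B_G M₂, where M₁, M₂ are constants with ⟨L_i* f, L_i* f⟩ ≤ M_i ⟨f,f⟩. -/
open MeasureTheory

noncomputable section

variable {A : Type*} [CStarAlgebra A] [PartialOrder A] [StarOrderedRing A]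
variable {U : Type*} [AddCommGroup U] [Module A U]
variable {Ω : Type*} [MeasurableSpace Ω]

section Aux

variable {A : Type*} [CStarAlgebra A] [PartialOrder A] [StarOrderedRing A]
variable {Ω : Type*} [MeasurableSpace Ω]

lemma sumFrame.integral_nonneg (μ : Measure Ω) (h : Ω → A) (hpos : ∀ ω, 0 ≤ h ω) :
    0 ≤ ∫ ω, h ω ∂μ := by
  by_cases hint : Integrable h μ
  · by_contra hc
    have hconv : Convex ℝ (Set.Ici (0:A)) :=
      fun a ha b hb ta tb hta htb _ => add_nonneg (smul_nonneg hta ha) (smul_nonneg htb hb)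
    obtain ⟨f, u, hfu, hux⟩ := geometric_hahn_banach_closed_point
      (x := ∫ ω, h ω ∂μ) hconv isClosed_Ici hc
    clear hc
    have hf0 : ∀ a : A, 0 ≤ a → f a ≤ 0 := by
      intro a ha
      by_contra hfa
      push_neg at hfa
      have ht : (0:ℝ) ≤ (u + 1 + |u|) / f a :=
        div_nonneg (by linarith [neg_abs_le u]) hfa.le
      have htu : u < ((u + 1 + |u|) / f a) * f a := by
        rw [div_mul_cancel₀ _ (ne_of_gt hfa)]; linarith [abs_nonneg u]
      have h2 := hfu (((u + 1 + |u|) / f a) • a) (smul_nonneg ht ha)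
      rw [f.map_smul, smul_eq_mul] at h2
      linarith
    have h0u : (0:ℝ) < u := by simpa using hfu 0 le_rfl
    have hle : f (∫ ω, h ω ∂μ) ≤ 0 := by
      rw [← ContinuousLinearMap.integral_comp_comm f hint]
      exact integral_nonpos fun ω => hf0 _ (hpos ω)
    exact lt_asymm h0u (hux.trans_le hle)
  · rw [integral_undef hint]

lemma sumFrame.integrable_star {μ : Measure Ω} {h : Ω → A} (hint : Integrable h μ) :
    Integrable (fun ω => star (h ω)) μ := by
  have := ContinuousLinearMap.integrable_comp
    ((starL' ℝ : A ≃L[ℝ] A).toContinuousLinearMap) hint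
  simpa using this

lemma sumFrame.integral_star (μ : Measure Ω) (h : Ω → A) (hint : Integrable h μ) :
    ∫ ω, star (h ω) ∂μ = star (∫ ω, h ω ∂μ) := by
  have := ContinuousLinearMap.integral_comp_comm
    ((starL' ℝ : A ≃L[ℝ] A).toContinuousLinearMap) hint
  simpa using this

end Aux

theorem sum_frame
    (μ : Measure Ω) (ip : U → U → A)
    (hip_add : ∀ f g h : U, ip (f + g) h = ip f h + ip g h)
    (hip_smul : ∀ (a : A) (f g : U), ip (a • f) g = a * ip f g)
    (hip_star : ∀ f g : U, star (ip f g) = ip g f)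
    (hip_pos : ∀ f : U, 0 ≤ ip f f)
    (hip_def : ∀ f : U, ip f f = 0 → f = 0)
    (F G : Ω → U) (A_F B_F B_G : ℝ)
    (hF : IsFrame μ ip F A_F B_F)
    (hB_G : 0 < B_G) (hGBessel : IsBessel μ ip G B_G) (hGdual : IsDual μ ip F G)
    (L₁ L₂ L₁s L₂s : U → U)
    (hadj₁ : ∀ f g : U, ip (L₁ f) g = ip f (L₁s g))
    (hadj₂ : ∀ f g : U, ip (L₂ f) g = ip f (L₂s g))
    (hinv : ∀ f : U, L₁ (L₂s f) = f)
    (M₁ M₂ : ℝ) (hM₁ : 0 < M₁) (hM₂ : 0 < M₂)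
    (hbd₁ : ∀ f : U, ip (L₁s f) (L₁s f) ≤ M₁ • ip f f)
    (hbd₂ : ∀ f : U, ip (L₂s f) (L₂s f) ≤ M₂ • ip f f) :
    IsFrame μ ip (fun ω => L₁ (F ω) + L₂ (G ω)) 2 (B_F * M₁ + 2 + B_G * M₂) := by
  obtain ⟨hA_F, hB_F, hFint, hFbd⟩ := hF
  obtain ⟨hGint, hGbd⟩ := hGBessel
  -- basic inner-product facts
  have ip0 : ∀ g : U, ip 0 g = 0 := by
    intro g
    have h := hip_add 0 0 g
    rw [add_zero] at h
    exact (add_eq_left.mp h.symm)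
  have ipar : ∀ f g h : U, ip f (g + h) = ip f g + ip f h := by
    intro f g h
    rw [← hip_star (g + h) f, hip_add, star_add, hip_star, hip_star]
  have ipL1 : ∀ f x : U, ip f (L₁ x) = ip (L₁s f) x := by
    intro f x
    rw [← hip_star (L₁ x) f, hadj₁, hip_star]
  have ipL2 : ∀ f x : U, ip f (L₂ x) = ip (L₂s f) x := by
    intro f x
    rw [← hip_star (L₂ x) f, hadj₂, hip_star]
  -- pointwise decomposition
  have hptL : ∀ (f : U) (ω : Ω), ip f (L₁ (F ω) + L₂ (G ω))
      = ip (L₁s f) (F ω) + ip (L₂s f) (G ω) := by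
    intro f ω; rw [ipar, ipL1, ipL2]
  have hptR : ∀ (g : U) (ω : Ω), ip (L₁ (F ω) + L₂ (G ω)) g
      = ip (F ω) (L₁s g) + ip (G ω) (L₂s g) := by
    intro g ω; rw [hip_add, hadj₁, hadj₂]
  have hfull : ∀ f g : U,
      (fun ω => ip f (L₁ (F ω) + L₂ (G ω)) * ip (L₁ (F ω) + L₂ (G ω)) g)
      = fun ω => (ip (L₁s f) (F ω) * ip (F ω) (L₁s g)
          + ip (L₁s f) (F ω) * ip (G ω) (L₂s g))
        + (ip (L₂s f) (G ω) * ip (F ω) (L₁s g)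
          + ip (L₂s f) (G ω) * ip (G ω) (L₂s g)) := by
    intro f g; funext ω; rw [hptL, hptR, add_mul, mul_add, mul_add]
  -- integrability of the mixed G-F term
  have hdualint : ∀ v u : U, Integrable (fun ω => ip v (G ω) * ip (F ω) u) μ := by
    intro v u
    by_cases hv : v = 0
    · have heq : (fun ω => ip v (G ω) * ip (F ω) u) = fun _ => (0:A) := by
        funext ω; rw [hv, ip0, zero_mul]
      rw [heq]
      exact integrable_zero _ _ _
    · have hne : ∀ w : U, ip v w ≠ 0 → Integrable (fun ω => ip v (G ω) * ip (F ω) w) μ := by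
        intro w hw
        by_contra hni
        exact hw (by rw [← hGdual v w, integral_undef hni])
      by_cases hvu : ip v u = 0
      · have hvv : ip v v ≠ 0 := fun h => hv (hip_def v h)
        have h1 := hne (u + v) (by rw [ipar, hvu, zero_add]; exact hvv)
        have h2 := hne v hvv
        have heq : (fun ω => ip v (G ω) * ip (F ω) u)
            = fun ω => ip v (G ω) * ip (F ω) (u + v) - ip v (G ω) * ip (F ω) v := by
          funext ω; rw [ipar, mul_add, add_sub_cancel_right]
        rw [heq]
        exact h1.sub h2
      · exact hne u hvu
  -- integrability of the mixed F-G term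
  have hmixint : ∀ a b : U, Integrable (fun ω => ip a (F ω) * ip (G ω) b) μ := by
    intro a b
    have h1 := sumFrame.integrable_star (hdualint b a)
    have heq : (fun ω => star (ip b (G ω) * ip (F ω) a))
        = fun ω => ip a (F ω) * ip (G ω) b := by
      funext ω; rw [star_mul, hip_star, hip_star]
    rwa [heq] at h1
  refine ⟨by norm_num, ?_, ?_, ?_⟩
  · have h1 := mul_pos hB_F hM₁
    have h2 := mul_pos hB_G hM₂
    linarith
  · intro f g
    show Integrable (fun ω => ip f (L₁ (F ω) + L₂ (G ω)) * ip (L₁ (F ω) + L₂ (G ω)) g) μ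
    rw [hfull f g]
    exact ((hFint _ _).add (hmixint _ _)).add ((hdualint _ _).add (hGint _ _))
  · intro f
    have hic2 : ∫ ω, ip (L₂s f) (G ω) * ip (F ω) (L₁s f) ∂μ = ip f f := by
      rw [hGdual (L₂s f) (L₁s f), ← hadj₁ (L₂s f) f, hinv f]
    have hic1 : ∫ ω, ip (L₁s f) (F ω) * ip (G ω) (L₂s f) ∂μ = ip f f := by
      have heqs : (fun ω => ip (L₁s f) (F ω) * ip (G ω) (L₂s f))
          = fun ω => star (ip (L₂s f) (G ω) * ip (F ω) (L₁s f)) := by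
        funext ω; rw [star_mul, hip_star, hip_star]
      rw [heqs, sumFrame.integral_star μ _ (hdualint (L₂s f) (L₁s f)), hic2, hip_star]
    have key : ∫ ω, ip f (L₁ (F ω) + L₂ (G ω)) * ip (L₁ (F ω) + L₂ (G ω)) f ∂μ
        = (∫ ω, ip (L₁s f) (F ω) * ip (F ω) (L₁s f) ∂μ + (ip f f + ip f f))
          + ∫ ω, ip (L₂s f) (G ω) * ip (G ω) (L₂s f) ∂μ := by
      have h1 := hFint (L₁s f) (L₁s f)
      have h2 := hmixint (L₁s f) (L₂s f)
      have h3 := hdualint (L₂s f) (L₁s f)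
      have h4 := hGint (L₂s f) (L₂s f)
      rw [hfull f f]
      have e1 : ∫ ω, ((ip (L₁s f) (F ω) * ip (F ω) (L₁s f)
              + ip (L₁s f) (F ω) * ip (G ω) (L₂s f))
            + (ip (L₂s f) (G ω) * ip (F ω) (L₁s f)
              + ip (L₂s f) (G ω) * ip (G ω) (L₂s f))) ∂μ
          = (∫ ω, ip (L₁s f) (F ω) * ip (F ω) (L₁s f)
              + ip (L₁s f) (F ω) * ip (G ω) (L₂s f) ∂μ)
            + ∫ ω, ip (L₂s f) (G ω) * ip (F ω) (L₁s f)
              + ip (L₂s f) (G ω) * ip (G ω) (L₂s f) ∂μ := by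
        exact integral_add (h1.add h2) (h3.add h4)
      have e2 : ∫ ω, ip (L₁s f) (F ω) * ip (F ω) (L₁s f)
              + ip (L₁s f) (F ω) * ip (G ω) (L₂s f) ∂μ
          = (∫ ω, ip (L₁s f) (F ω) * ip (F ω) (L₁s f) ∂μ)
            + ∫ ω, ip (L₁s f) (F ω) * ip (G ω) (L₂s f) ∂μ := by
        exact integral_add h1 h2
      have e3 : ∫ ω, ip (L₂s f) (G ω) * ip (F ω) (L₁s f)
              + ip (L₂s f) (G ω) * ip (G ω) (L₂s f) ∂μ
          = (∫ ω, ip (L₂s f) (G ω) * ip (F ω) (L₁s f) ∂μ)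
            + ∫ ω, ip (L₂s f) (G ω) * ip (G ω) (L₂s f) ∂μ := by
        exact integral_add h3 h4
      rw [e1, e2, e3, hic1, hic2]
      abel
    have hT1nn : (0:A) ≤ ∫ ω, ip (L₁s f) (F ω) * ip (F ω) (L₁s f) ∂μ :=
      le_trans (smul_nonneg hA_F.le (hip_pos (L₁s f))) (hFbd (L₁s f)).1
    have hT2nn : (0:A) ≤ ∫ ω, ip (L₂s f) (G ω) * ip (G ω) (L₂s f) ∂μ := by
      refine sumFrame.integral_nonneg μ _ fun ω => ?_
      rw [← hip_star (L₂s f) (G ω)]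
      exact mul_star_self_nonneg _
    have hT1ub : ∫ ω, ip (L₁s f) (F ω) * ip (F ω) (L₁s f) ∂μ ≤ (B_F * M₁) • ip f f := by
      refine le_trans (hFbd (L₁s f)).2 ?_
      rw [← smul_smul]
      exact smul_le_smul_of_nonneg_left (hbd₁ f) hB_F.le
    have hT2ub : ∫ ω, ip (L₂s f) (G ω) * ip (G ω) (L₂s f) ∂μ ≤ (B_G * M₂) • ip f f := by
      refine le_trans (hGbd (L₂s f)) ?_
      rw [← smul_smul]
      exact smul_le_smul_of_nonneg_left (hbd₂ f) hB_G.le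
    constructor
    · show (2:ℝ) • ip f f ≤ ∫ ω, ip f (L₁ (F ω) + L₂ (G ω)) * ip (L₁ (F ω) + L₂ (G ω)) f ∂μ
      rw [key]
      calc (2:ℝ) • ip f f = (0 + (ip f f + ip f f)) + 0 := by
            rw [two_smul, zero_add, add_zero]
        _ ≤ _ := add_le_add (add_le_add hT1nn le_rfl) hT2nn
    · show ∫ ω, ip f (L₁ (F ω) + L₂ (G ω)) * ip (L₁ (F ω) + L₂ (G ω)) f ∂μ
        ≤ (B_F * M₁ + 2 + B_G * M₂) • ip f f
      rw [key, add_smul, add_smul, two_smul]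
      exact add_le_add (add_le_add hT1ub le_rfl) hT2ub
end
end

section
/- Let F : Ω → U be a continuous frame and G a dual of F. If there exists an adjointable operator L on U such that ω ↦ LG(ω) is also a dual of F, then L = I_U. -/
open MeasureTheory

noncomputable section

variable {A : Type*} [CStarAlgebra A] [PartialOrder A] [StarOrderedRing A]
variable {U : Type*} [AddCommGroup U] [Module A U]
variable {Ω : Type*} [MeasurableSpace Ω]

theorem LG_dual_implies_L_identity
    (μ : Measure Ω) (ip : U → U → A)
    (hip_add : ∀ f g h : U, ip (f + g) h = ip f h + ip g h)
    (hip_smul : ∀ (a : A) (f g : U), ip (a • f) g = a * ip f g)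
    (hip_star : ∀ f g : U, star (ip f g) = ip g f)
    (hip_pos : ∀ f : U, 0 ≤ ip f f)
    (hip_def : ∀ f : U, ip f f = 0 → f = 0)
    (F G : Ω → U) (A_F B_F B_G : ℝ)
    (hF : IsFrame μ ip F A_F B_F)
    (hB_G : 0 < B_G) (hGBessel : IsBessel μ ip G B_G) (hGdual : IsDual μ ip F G)
    (L Ls : U → U)
    (hadj : ∀ f g : U, ip (L f) g = ip f (Ls g))
    (hLGdual : IsDual μ ip F (fun ω => L (G ω))) :
    ∀ f : U, L f = f := by
  have hneg : ∀ f h : U, ip (-f) h = -ip f h := by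
    intro f h
    have := hip_smul (-1 : A) f h
    simpa using this
  have hsub : ∀ f g h : U, ip (f - g) h = ip f h - ip g h := by
    intro f g h
    rw [sub_eq_add_neg, hip_add, hneg, sub_eq_add_neg]
  -- ip f (L x) = ip (Ls f) x
  have hswap : ∀ f x : U, ip f (L x) = ip (Ls f) x := by
    intro f x
    have h1 : star (ip f (L x)) = ip (L x) f := hip_star _ _
    rw [hadj] at h1
    calc ip f (L x) = star (star (ip f (L x))) := by rw [star_star]
      _ = star (ip x (Ls f)) := by rw [h1]
      _ = ip (Ls f) x := hip_star _ _
  -- Ls f = f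
  have hLs : ∀ f : U, Ls f = f := by
    intro f
    have key : ∀ g : U, ip (Ls f) g = ip f g := by
      intro g
      have := hLGdual f g
      simp only [hswap] at this
      rw [hGdual (Ls f) g] at this
      exact this
    have hz : ip (Ls f - f) (Ls f - f) = 0 := by
      rw [hsub, key, sub_self]
    have := hip_def _ hz
    exact sub_eq_zero.mp this
  have hLs' : ∀ f : U, Ls f = f := hLs
  intro f
  have key : ∀ g : U, ip (L f) g = ip f g := by
    intro g
    rw [hadj, hLs]
  have hz : ip (L f - f) (L f - f) = 0 := by
    rw [hsub, key, sub_self]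
  exact sub_eq_zero.mp (hip_def _ hz)
end
end

section
/- Let F : Ω → U be a continuous frame and G, K two duals of F, and let V₁, V₂ be adjointable operators on U. Then ω ↦ V₁G(ω) + V₂K(ω) is a dual of F if and only if V₁ + V₂ = I_U. -/
open MeasureTheory

noncomputable section

variable {A : Type*} [CStarAlgebra A] [PartialOrder A] [StarOrderedRing A]
variable {U : Type*} [AddCommGroup U] [Module A U]
variable {Ω : Type*} [MeasurableSpace Ω]

/-- Mixed integrability from duality (junk-value argument on the diagonal + polarization). -/
lemma dual_mixed_integrable (μ : Measure Ω) (ip : U → U → A)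
    (hip_add : ∀ f g h : U, ip (f + g) h = ip f h + ip g h)
    (hip_smul : ∀ (a : A) (f g : U), ip (a • f) g = a * ip f g)
    (hip_star : ∀ f g : U, star (ip f g) = ip g f)
    (hip_def : ∀ f : U, ip f f = 0 → f = 0)
    (F H : Ω → U) (hdual : IsDual μ ip F H) (f g : U) :
    Integrable (fun ω => ip f (H ω) * ip (F ω) g) μ := by
  have ip2 : ∀ x y : U, ip x y = star (ip y x) := fun x y => (hip_star y x).symm
  have hadd₂ : ∀ x y z : U, ip x (y + z) = ip x y + ip x z := by
    intro x y z
    rw [ip2 x (y + z), hip_add, star_add, ← ip2, ← ip2]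
  have hneg₁ : ∀ x y : U, ip (-x) y = -ip x y := by
    intro x y
    have := hip_smul (-1) x y
    rwa [neg_one_smul, neg_one_mul] at this
  have hsub₁ : ∀ x y z : U, ip (x - y) z = ip x z - ip y z := by
    intro x y z
    rw [sub_eq_add_neg, hip_add, hneg₁, ← sub_eq_add_neg]
  have hsub₂ : ∀ x y z : U, ip x (y - z) = ip x y - ip x z := by
    intro x y z
    rw [ip2 x (y - z), hsub₁, star_sub, ← ip2, ← ip2]
  have hsmul₂ : ∀ (a : A) (x y : U), ip x (a • y) = ip x y * star a := by
    intro a x y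
    rw [ip2 x (a • y), hip_smul, star_mul, ← ip2]
  have hzero : ∀ y : U, ip 0 y = 0 := by
    intro y
    have := hip_smul 0 0 y
    simpa using this
  -- diagonal integrability
  have diag : ∀ h : U, Integrable (fun ω => ip h (H ω) * ip (F ω) h) μ := by
    intro h
    by_contra hni
    have h0 : ∫ ω, ip h (H ω) * ip (F ω) h ∂μ = 0 := integral_undef hni
    have hh : ip h h = 0 := by rw [← hdual h h, h0]
    have hh0 : h = 0 := hip_def h hh
    apply hni
    subst hh0
    have : (fun ω => ip (0 : U) (H ω) * ip (F ω) (0 : U)) = fun _ => (0 : A) := by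
      funext ω; rw [hzero, zero_mul]
    rw [this]
    exact integrable_zero _ _ _
  -- polarization
  set j : A := algebraMap ℂ A Complex.I with hj_def
  have hjs : star j = -j := by
    rw [hj_def, Algebra.algebraMap_eq_smul_one, star_smul, star_one, Complex.star_def,
      Complex.conj_I, neg_smul]
  have hL : ∀ x : A, j * x = Complex.I • x := fun x => (Algebra.smul_def _ _).symm
  have key : (fun ω => ip f (H ω) * ip (F ω) g) = fun ω =>
      (4⁻¹ : ℂ) • ((ip (f + g) (H ω) * ip (F ω) (f + g)
          - ip (f - g) (H ω) * ip (F ω) (f - g))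
        + Complex.I • (ip (f + j • g) (H ω) * ip (F ω) (f + j • g)
          - ip (f - j • g) (H ω) * ip (F ω) (f - j • g))) := by
    funext ω
    simp only [hip_add, hsub₁, hadd₂, hsub₂, hip_smul, hsmul₂, hjs, hL]
    set a1 := ip f (H ω); set b1 := ip g (H ω)
    set a2 := ip (F ω) f; set b2 := ip (F ω) g
    simp only [mul_neg, ← sub_eq_add_neg, sub_neg_eq_add]
    rw [show b2 * j = Complex.I • b2 by rw [← Algebra.commutes Complex.I b2]; exact hL b2]
    simp only [mul_add, add_mul, mul_sub, sub_mul, smul_mul_assoc, mul_smul_comm, smul_add,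
      smul_sub, smul_smul, Complex.I_mul_I, ← sub_eq_add_neg, sub_neg_eq_add]
    module
  rw [key]
  exact ((((diag (f + g)).sub (diag (f - g))).add
    (((diag (f + j • g)).sub (diag (f - j • g))).smul Complex.I)).smul (4⁻¹ : ℂ))


theorem operator_combination_dual_iff
    (μ : Measure Ω) (ip : U → U → A)
    (hip_add : ∀ f g h : U, ip (f + g) h = ip f h + ip g h)
    (hip_smul : ∀ (a : A) (f g : U), ip (a • f) g = a * ip f g)
    (hip_star : ∀ f g : U, star (ip f g) = ip g f)
    (hip_pos : ∀ f : U, 0 ≤ ip f f)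
    (hip_def : ∀ f : U, ip f f = 0 → f = 0)
    (F : Ω → U) (A₀ B₀ : ℝ) (hF : IsFrame μ ip F A₀ B₀)
    (S Sinv : U → U) (hS : IsFrameOp μ ip F S)
    (hSinv₁ : ∀ f, Sinv (S f) = f) (hSinv₂ : ∀ f, S (Sinv f) = f)
    (G K : Ω → U) (B_G B_K : ℝ) (hB_G : 0 < B_G) (hB_K : 0 < B_K)
    (hGBessel : IsBessel μ ip G B_G) (hKBessel : IsBessel μ ip K B_K)
    (hGdual : IsDual μ ip F G) (hKdual : IsDual μ ip F K)
    (V₁ V₂ V₁s V₂s : U → U)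
    (hadj₁ : ∀ f g : U, ip (V₁ f) g = ip f (V₁s g))
    (hadj₂ : ∀ f g : U, ip (V₂ f) g = ip f (V₂s g)) :
    IsDual μ ip F (fun ω => V₁ (G ω) + V₂ (K ω)) ↔ ∀ f : U, V₁ f + V₂ f = f := by
  have ip2 : ∀ x y : U, ip x y = star (ip y x) := fun x y => (hip_star y x).symm
  have hadd₂ : ∀ x y z : U, ip x (y + z) = ip x y + ip x z := by
    intro x y z
    rw [ip2 x (y + z), hip_add, star_add, ← ip2, ← ip2]
  have hneg₁ : ∀ x y : U, ip (-x) y = -ip x y := by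
    intro x y
    have := hip_smul (-1) x y
    rwa [neg_one_smul, neg_one_mul] at this
  have hsub₁ : ∀ x y z : U, ip (x - y) z = ip x z - ip y z := by
    intro x y z
    rw [sub_eq_add_neg, hip_add, hneg₁, ← sub_eq_add_neg]
  -- move V₁/V₂ across the inner product in the second slot
  have hmove₁ : ∀ x y : U, ip x (V₁ y) = ip (V₁s x) y := by
    intro x y
    rw [ip2 x (V₁ y), hadj₁, ← ip2]
  have hmove₂ : ∀ x y : U, ip x (V₂ y) = ip (V₂s x) y := by
    intro x y
    rw [ip2 x (V₂ y), hadj₂, ← ip2]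
  -- the combination integrand splits pointwise
  have hfun : ∀ x g : U, (fun ω => ip x (V₁ (G ω) + V₂ (K ω)) * ip (F ω) g)
      = fun ω => ip (V₁s x) (G ω) * ip (F ω) g + ip (V₂s x) (K ω) * ip (F ω) g := by
    intro x g
    funext ω
    rw [hadd₂, hmove₁, hmove₂, add_mul]
  constructor
  · intro hd f
    have key : ∀ x y : U, ip (V₁s x) y + ip (V₂s x) y = ip x y := by
      intro x y
      have hA : Integrable (fun ω => ip (V₁s x) (G ω) * ip (F ω) y) μ :=
        dual_mixed_integrable μ ip hip_add hip_smul hip_star hip_def F G hGdual _ _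
      have hB : Integrable (fun ω => ip (V₂s x) (K ω) * ip (F ω) y) μ :=
        dual_mixed_integrable μ ip hip_add hip_smul hip_star hip_def F K hKdual _ _
      have hsplit := integral_add hA hB
      have hcomb := hd x y
      rw [hfun x y, hsplit, hGdual (V₁s x) y, hKdual (V₂s x) y] at hcomb
      exact hcomb
    -- transpose to V₁, V₂
    have key' : ∀ x y : U, ip (V₁ y) x + ip (V₂ y) x = ip y x := by
      intro x y
      have h := congrArg star (key x y)
      rw [star_add, hip_star, hip_star, hip_star, ← hadj₁, ← hadj₂] at h
      exact h
    have hw : ip (V₁ f + V₂ f - f) (V₁ f + V₂ f - f) = 0 := by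
      rw [hsub₁, hip_add, key' _ f, sub_self]
    exact sub_eq_zero.mp (hip_def _ hw)
  · intro hsum f g
    have hsub₂ : ∀ x y z : U, ip x (y - z) = ip x y - ip x z := by
      intro x y z
      rw [ip2 x (y - z), hsub₁, star_sub, ← ip2, ← ip2]
    have hid : ∀ h : U, V₁s h + V₂s h = h := by
      intro h
      have hx : ∀ x : U, ip x (V₁s h + V₂s h - h) = 0 := by
        intro x
        rw [hsub₂, hadd₂, ← hadj₁, ← hadj₂, ← hip_add, hsum x, sub_self]
      exact sub_eq_zero.mp (hip_def _ (by
        rw [ip2]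
        rw [hx (V₁s h + V₂s h - h), star_zero]))
    have hA : Integrable (fun ω => ip (V₁s f) (G ω) * ip (F ω) g) μ :=
      dual_mixed_integrable μ ip hip_add hip_smul hip_star hip_def F G hGdual _ _
    have hB : Integrable (fun ω => ip (V₂s f) (K ω) * ip (F ω) g) μ :=
      dual_mixed_integrable μ ip hip_add hip_smul hip_star hip_def F K hKdual _ _
    show ∫ ω, ip f (V₁ (G ω) + V₂ (K ω)) * ip (F ω) g ∂μ = ip f g
    rw [hfun f g, integral_add hA hB, hGdual (V₁s f) g, hKdual (V₂s f) g, ← hip_add, hid]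
end
end
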